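/- For any three density matrices ρ, σ, ξ of the same size, F(ρ,σ)² + F(ξ,σ)² ≤ 1 + F(ρ,ξ). (Lemma on fidelity/trace-distance relations, item 2.) -/

import Mathlib

/-!
Write `F(ρ,σ) = tr |√σ √ρ|` and take the polar decomposition `√σ √ρ = U |√σ √ρ|` with `‖U‖ ≤ 1`;
then `F(ρ,σ) = re ⟪U √ρ, √σ⟫` for the Hilbert–Schmidt inner product `⟪A, B⟫ = tr (Aᴴ B)`. The
vectors `a = U₁ √ρ`, `b = √σ`, `c = U₂ √ξ` lie in the unit ball, and the Hölder inequality
`|tr (M X)| ≤ ‖M‖ · tr |X|` gives `|⟪a, c⟫| = |tr (U₁ᴴ U₂ · √ξ √ρ)| ≤ F(ρ,ξ)`. So it suffices that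
`x² + y² ≤ 1 + |⟪a, c⟫|` for `x = re ⟪a, b⟫`, `y = re ⟪c, b⟫`: testing `b` against
`v = x a + y c` gives `x² + y² ≤ ‖v‖` and `‖v‖² ≤ (x² + y²)(1 + |⟪a, c⟫|)`.
-/

open scoped Matrix ComplexOrder

/-- The positive semidefinite square root of a matrix (junk value `0` if the matrix is not
positive semidefinite). -/
noncomputable def psdSqrt {m : ℕ} (A : Matrix (Fin m) (Fin m) ℂ) : Matrix (Fin m) (Fin m) ℂ :=
  letI := Classical.dec A.PosSemidef
  if h : A.PosSemidef then
    h.1.eigenvectorUnitary.1 * Matrix.diagonal ((↑) ∘ (√·) ∘ h.1.eigenvalues) *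
      (star h.1.eigenvectorUnitary : Matrix (Fin m) (Fin m) ℂ)
  else 0

/-- The fidelity `F(ρ,σ) = tr √(√ρ · σ · √ρ)` of two density matrices. -/
noncomputable def fidelity {m : ℕ} (ρ σ : Matrix (Fin m) (Fin m) ℂ) : ℝ :=
  ((psdSqrt (psdSqrt ρ * σ * psdSqrt ρ)).trace).re

/-- The trace distance `dist(ρ,σ) = (1/2)·tr √((ρ−σ)†(ρ−σ))` of two density matrices. -/
noncomputable def traceDist {m : ℕ} (ρ σ : Matrix (Fin m) (Fin m) ℂ) : ℝ :=
  (1 / 2) * ((psdSqrt ((ρ - σ)ᴴ * (ρ - σ))).trace).re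

open scoped MatrixOrder Matrix.Norms.L2Operator InnerProductSpace

open RCLike in
theorem re_inner_sq_add_re_inner_sq_le {𝕜 E : Type*} [RCLike 𝕜] [NormedAddCommGroup E]
    [InnerProductSpace 𝕜 E] {a b c : E} (ha : ‖a‖ ≤ 1) (hb : ‖b‖ ≤ 1) (hc : ‖c‖ ≤ 1) :
    re ⟪a, b⟫_𝕜 ^ 2 + re ⟪c, b⟫_𝕜 ^ 2 ≤ 1 + ‖⟪a, c⟫_𝕜‖ := by
  set x := re ⟪a, b⟫_𝕜
  set y := re ⟪c, b⟫_𝕜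
  set v := (x : 𝕜) • a + (y : 𝕜) • c
  have hS : x ^ 2 + y ^ 2 ≤ ‖v‖ := by
    calc x ^ 2 + y ^ 2 = re ⟪v, b⟫_𝕜 := by
          simp only [v, inner_add_left, inner_smul_left, conj_ofReal, map_add, re_ofReal_mul]; ring
      _ ≤ ‖v‖ * ‖b‖ := re_inner_le_norm v b
      _ ≤ ‖v‖ := mul_le_of_le_one_right (norm_nonneg v) hb
  have hv : ‖v‖ ^ 2 ≤ (x ^ 2 + y ^ 2) * (1 + ‖⟪a, c⟫_𝕜‖) := by
    have hxa : ‖(x : 𝕜) • a‖ ≤ |x| := by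
      rw [norm_smul, norm_ofReal]; exact mul_le_of_le_one_right (abs_nonneg x) ha
    have hyc : ‖(y : 𝕜) • c‖ ≤ |y| := by
      rw [norm_smul, norm_ofReal]; exact mul_le_of_le_one_right (abs_nonneg y) hc
    have hxy : re ⟪(x : 𝕜) • a, (y : 𝕜) • c⟫_𝕜 ≤ |x| * |y| * ‖⟪a, c⟫_𝕜‖ := by
      refine (re_le_norm _).trans_eq ?_
      rw [inner_smul_left, inner_smul_right, norm_mul, norm_mul, norm_conj, norm_ofReal,
        norm_ofReal, mul_assoc]
    rw [norm_add_sq (𝕜 := 𝕜)]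
    nlinarith [sq_abs x, sq_abs y, two_mul_le_add_sq |x| |y|, norm_nonneg ⟪a, c⟫_𝕜,
      norm_nonneg ((x : 𝕜) • a), norm_nonneg ((y : 𝕜) • c), abs_nonneg x, abs_nonneg y]
  nlinarith [norm_nonneg v, norm_nonneg ⟪a, c⟫_𝕜]

namespace Matrix

variable {n : Type*} [Fintype n]

theorem re_trace_le_re_trace {A B : Matrix n n ℂ} (h : A ≤ B) : A.trace.re ≤ B.trace.re := by
  simpa [trace_sub] using (Complex.le_def.mp (PosSemidef.trace_nonneg h)).1

noncomputable def hsVec (A : Matrix n n ℂ) : EuclideanSpace ℂ (n × n) :=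
  WithLp.toLp 2 fun p => A p.1 p.2

theorem inner_hsVec (A B : Matrix n n ℂ) : ⟪hsVec A, hsVec B⟫_ℂ = (star A * B).trace := by
  simp only [hsVec, PiLp.inner_apply, RCLike.inner_apply, trace, diag_apply, mul_apply,
    star_apply, Fintype.sum_prod_type]
  rw [Finset.sum_comm]
  exact Finset.sum_congr rfl fun i _ => Finset.sum_congr rfl fun j _ => mul_comm _ _

theorem norm_hsVec_sq (A : Matrix n n ℂ) : ‖hsVec A‖ ^ 2 = (star A * A).trace.re := by
  rw [← inner_hsVec, ← inner_self_eq_norm_sq (𝕜 := ℂ)]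
  rfl

variable [DecidableEq n]

theorem norm_hsVec_mul_le (M A : Matrix n n ℂ) : ‖hsVec (M * A)‖ ≤ ‖M‖ * ‖hsVec A‖ := by
  have h : star A * (star M * M) * A ≤ ‖star M * M‖ • (star A * A) :=
    CStarAlgebra.star_left_conjugate_le_norm_smul (.star_mul_self M)
  have hsq : ‖hsVec (M * A)‖ ^ 2 ≤ (‖M‖ * ‖hsVec A‖) ^ 2 := by
    rw [CStarRing.norm_star_mul_self, ← sq] at h
    rw [mul_pow, norm_hsVec_sq, norm_hsVec_sq, star_mul]
    simpa only [mul_assoc, trace_smul, Complex.smul_re, smul_eq_mul] using re_trace_le_re_trace h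
  exact pow_le_pow_iff_left₀ (norm_nonneg _) (by positivity) two_ne_zero |>.mp hsq

theorem norm_hsVec_sqrt {A : Matrix n n ℂ} (hA : 0 ≤ A) :
    ‖hsVec (CFC.sqrt A)‖ ^ 2 = A.trace.re := by
  rw [norm_hsVec_sq, (CFC.sqrt_nonneg A).isSelfAdjoint.star_eq, CFC.sqrt_mul_sqrt_self A hA]

theorem norm_hsVec_sqrt_of_trace_eq_one {ρ : Matrix n n ℂ} (hρ : ρ.PosSemidef)
    (hρ1 : ρ.trace = 1) : ‖hsVec (CFC.sqrt ρ)‖ = 1 := by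
  have h := norm_hsVec_sqrt hρ.nonneg
  rwa [hρ1, Complex.one_re, pow_eq_one_iff_of_nonneg (norm_nonneg _) two_ne_zero] at h

theorem norm_hsVec_mul_sqrt_le_one {U ρ : Matrix n n ℂ} (hU : ‖U‖ ≤ 1) (hρ : ρ.PosSemidef)
    (hρ1 : ρ.trace = 1) : ‖hsVec (U * CFC.sqrt ρ)‖ ≤ 1 :=
  (norm_hsVec_mul_le _ _).trans (by rwa [norm_hsVec_sqrt_of_trace_eq_one hρ hρ1, mul_one])

theorem cfc_mul_cfc (f g : ℝ → ℝ) (A : Matrix n n ℂ) :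
    cfc f A * cfc g A = cfc (fun x => f x * g x) A :=
  (cfc_mul f g A (finite_real_spectrum.continuousOn f) (finite_real_spectrum.continuousOn g)).symm

theorem mul_cfc_inv_mul_self {A : Matrix n n ℂ} (hA : IsSelfAdjoint A) :
    A * cfc (·⁻¹ : ℝ → ℝ) A * A = A := by
  nth_rw 1 3 [← cfc_id' ℝ A]
  rw [cfc_mul_cfc, cfc_mul_cfc]
  exact (cfc_congr fun x _ => mul_inv_mul_cancel x).trans (cfc_id' ℝ A)

theorem cfc_inv_mul_self_mul_self {A : Matrix n n ℂ} (hA : IsSelfAdjoint A) :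
    cfc (·⁻¹ : ℝ → ℝ) A * A * A = A := by
  nth_rw 2 3 [← cfc_id' ℝ A]
  rw [cfc_mul_cfc, cfc_mul_cfc]
  exact (cfc_congr fun x _ => inv_mul_mul_self x).trans (cfc_id' ℝ A)

theorem mul_cfc_inv_le_one {A : Matrix n n ℂ} (hA : IsSelfAdjoint A) :
    A * cfc (·⁻¹ : ℝ → ℝ) A ≤ 1 := by
  nth_rw 1 [← cfc_id' ℝ A]
  rw [cfc_mul_cfc]
  exact cfc_le_one _ _ fun x _ => mul_inv_le_one

-- `cfc (·⁻¹) |X|` is the Moore–Penrose pseudo-inverse of `|X|`, thanks to `(0 : ℝ)⁻¹ = 0`.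
noncomputable def polarFactor (X : Matrix n n ℂ) : Matrix n n ℂ :=
  X * cfc (·⁻¹ : ℝ → ℝ) (CFC.abs X)

theorem star_polarFactor_mul_self (X : Matrix n n ℂ) :
    star (polarFactor X) * X = CFC.abs X := by
  have hG : IsSelfAdjoint (cfc (·⁻¹ : ℝ → ℝ) (CFC.abs X)) := cfc_predicate _ _
  rw [polarFactor, star_mul, hG.star_eq, mul_assoc, ← CFC.abs_mul_abs, ← mul_assoc,
    cfc_inv_mul_self_mul_self (CFC.abs_nonneg X).isSelfAdjoint]

theorem norm_polarFactor_le_one (X : Matrix n n ℂ) : ‖polarFactor X‖ ≤ 1 := by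
  have h : star (polarFactor X) * polarFactor X ≤ 1 := by
    nth_rw 2 [polarFactor]
    rw [← mul_assoc, star_polarFactor_mul_self]
    exact mul_cfc_inv_le_one (CFC.abs_nonneg X).isSelfAdjoint
  rw [← CStarAlgebra.norm_le_one_iff_of_nonneg _ (star_mul_self_nonneg _),
    CStarRing.norm_star_mul_self] at h
  nlinarith [norm_nonneg (polarFactor X)]

theorem polarFactor_mul_abs (X : Matrix n n ℂ) : polarFactor X * CFC.abs X = X := by
  set P := CFC.abs X
  set G := cfc (·⁻¹ : ℝ → ℝ) P
  have hP : IsSelfAdjoint P := (CFC.abs_nonneg X).isSelfAdjoint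
  have hG : IsSelfAdjoint G := cfc_predicate _ _
  have h : star (X - X * G * P) * (X - X * G * P) = 0 :=
    calc star (X - X * G * P) * (X - X * G * P)
        = (1 - P * G) * (star X * X) * (1 - G * P) := by
          simp only [star_sub, star_mul, hP.star_eq, hG.star_eq]; noncomm_ring
      _ = (P - P * G * P) * (P - P * G * P) := by
          rw [← CFC.abs_mul_abs]; noncomm_ring
      _ = 0 := by rw [mul_cfc_inv_mul_self hP, sub_self, zero_mul]
  rw [CStarRing.star_mul_self_eq_zero_iff, sub_eq_zero] at h
  exact h.symm

theorem norm_trace_mul_le (M X : Matrix n n ℂ) :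
    ‖(M * X).trace‖ ≤ ‖M‖ * (CFC.abs X).trace.re := by
  obtain ⟨U, hU⟩ : ∃ U, U = polarFactor X := ⟨_, rfl⟩
  obtain ⟨R, hR⟩ : ∃ R, R = CFC.sqrt (CFC.abs X) := ⟨_, rfl⟩
  have hRR : R * R = CFC.abs X := hR ▸ CFC.sqrt_mul_sqrt_self _ (CFC.abs_nonneg X)
  have htrace : (M * X).trace = ⟪hsVec (star (M * U) * R), hsVec R⟫_ℂ := by
    rw [inner_hsVec, star_mul, star_star, hR, (CFC.sqrt_nonneg _).isSelfAdjoint.star_eq, ← hR,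
      trace_mul_cycle, hRR, trace_mul_comm (CFC.abs X), mul_assoc, hU, polarFactor_mul_abs]
  have hMU : ‖star (M * U)‖ ≤ ‖M‖ := by
    rw [norm_star, hU]
    exact (norm_mul_le _ _).trans
      (mul_le_of_le_one_right (norm_nonneg M) (norm_polarFactor_le_one X))
  calc ‖(M * X).trace‖ ≤ ‖hsVec (star (M * U) * R)‖ * ‖hsVec R‖ := by
        rw [htrace]; exact norm_inner_le_norm _ _
    _ ≤ ‖M‖ * ‖hsVec R‖ * ‖hsVec R‖ := by
        gcongr
        exact (norm_hsVec_mul_le _ _).trans (by gcongr)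
    _ = ‖M‖ * (CFC.abs X).trace.re := by
        rw [mul_assoc, ← sq, hR, norm_hsVec_sqrt (CFC.abs_nonneg X)]

end Matrix

open Matrix

theorem psdSqrt_eq_sqrt {m : ℕ} {A : Matrix (Fin m) (Fin m) ℂ} (hA : A.PosSemidef) :
    psdSqrt A = CFC.sqrt A := by
  rw [CFC.sqrt_eq_real_sqrt A hA.nonneg, cfcₙ_eq_cfc, hA.1.cfc_eq, psdSqrt, dif_pos hA]
  rfl

section

variable {m : ℕ} {ρ σ ξ : Matrix (Fin m) (Fin m) ℂ}

theorem fidelity_eq_re_trace_abs (hρ : ρ.PosSemidef) (hσ : σ.PosSemidef) :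
    fidelity ρ σ = (CFC.abs (CFC.sqrt σ * CFC.sqrt ρ)).trace.re := by
  have h : psdSqrt ρ * σ * psdSqrt ρ =
      star (CFC.sqrt σ * CFC.sqrt ρ) * (CFC.sqrt σ * CFC.sqrt ρ) := by
    rw [psdSqrt_eq_sqrt hρ, star_mul, (CFC.sqrt_nonneg ρ).isSelfAdjoint.star_eq,
      (CFC.sqrt_nonneg σ).isSelfAdjoint.star_eq]
    conv_lhs => rw [← CFC.sqrt_mul_sqrt_self σ hσ.nonneg]
    simp only [mul_assoc]
  rw [fidelity, h, psdSqrt_eq_sqrt (nonneg_iff_posSemidef.mp (star_mul_self_nonneg _))]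
  rfl

theorem fidelity_eq_re_inner (hρ : ρ.PosSemidef) (hσ : σ.PosSemidef) :
    fidelity ρ σ = (⟪hsVec (polarFactor (CFC.sqrt σ * CFC.sqrt ρ) * CFC.sqrt ρ),
      hsVec (CFC.sqrt σ)⟫_ℂ).re := by
  rw [inner_hsVec, star_mul, (CFC.sqrt_nonneg ρ).isSelfAdjoint.star_eq,
    trace_mul_cycle, trace_mul_comm, star_polarFactor_mul_self, fidelity_eq_re_trace_abs hρ hσ]

theorem norm_inner_hsVec_le_fidelity {U V : Matrix (Fin m) (Fin m) ℂ} (hU : ‖U‖ ≤ 1)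
    (hV : ‖V‖ ≤ 1) (hρ : ρ.PosSemidef) (hξ : ξ.PosSemidef) :
    ‖⟪hsVec (U * CFC.sqrt ρ), hsVec (V * CFC.sqrt ξ)⟫_ℂ‖ ≤ fidelity ρ ξ := by
  have htrace : ⟪hsVec (U * CFC.sqrt ρ), hsVec (V * CFC.sqrt ξ)⟫_ℂ =
      (star U * V * (CFC.sqrt ξ * CFC.sqrt ρ)).trace := by
    rw [inner_hsVec, star_mul, (CFC.sqrt_nonneg ρ).isSelfAdjoint.star_eq, mul_assoc,
      trace_mul_comm]
    simp only [mul_assoc]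
  have hUV : ‖star U * V‖ ≤ 1 :=
    (norm_mul_le _ _).trans (mul_le_one₀ (by rwa [norm_star]) (norm_nonneg V) hV)
  rw [htrace, fidelity_eq_re_trace_abs hρ hξ]
  have hF : 0 ≤ (CFC.abs (CFC.sqrt ξ * CFC.sqrt ρ)).trace.re := by
    simpa using re_trace_le_re_trace (CFC.abs_nonneg (CFC.sqrt ξ * CFC.sqrt ρ))
  exact (norm_trace_mul_le _ _).trans (mul_le_of_le_one_left hF hUV)

end

/-- For any three density matrices `ρ σ ξ`, one has `F(ρ,σ)² + F(ξ,σ)² ≤ 1 + F(ρ,ξ)`. -/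
theorem fidelity_sq_add_fidelity_sq_le {m : ℕ} (ρ σ ξ : Matrix (Fin m) (Fin m) ℂ)
    (hρ : ρ.PosSemidef) (hσ : σ.PosSemidef) (hξ : ξ.PosSemidef)
    (hρ1 : ρ.trace = 1) (hσ1 : σ.trace = 1) (hξ1 : ξ.trace = 1) :
    fidelity ρ σ ^ 2 + fidelity ξ σ ^ 2 ≤ 1 + fidelity ρ ξ := by
  have key := re_inner_sq_add_re_inner_sq_le (𝕜 := ℂ)
    (norm_hsVec_mul_sqrt_le_one (norm_polarFactor_le_one (CFC.sqrt σ * CFC.sqrt ρ)) hρ hρ1)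
    (norm_hsVec_sqrt_of_trace_eq_one hσ hσ1).le
    (norm_hsVec_mul_sqrt_le_one (norm_polarFactor_le_one (CFC.sqrt σ * CFC.sqrt ξ)) hξ hξ1)
  rw [RCLike.re_to_complex, RCLike.re_to_complex, ← fidelity_eq_re_inner hρ hσ,
    ← fidelity_eq_re_inner hξ hσ] at key
  linarith [norm_inner_hsVec_le_fidelity (norm_polarFactor_le_one (CFC.sqrt σ * CFC.sqrt ρ))
    (norm_polarFactor_le_one (CFC.sqrt σ * CFC.sqrt ξ)) hρ hξ]
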